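/- Let A be a set of qubits, j ∉ A, and let S be the Pauli word with Z on every qubit of A ∪ {j} and identity elsewhere. Let P = P(A, j) be the stabilizer-rotation Pauli word (Z on every qubit of A, Y on j, identity elsewhere) and Y_j the Pauli word with Y on qubit j and identity elsewhere. Then the composition of the two π/4 Pauli rotations maps the Z-type stabilizer S to a single-qubit Pauli Z up to sign: exp(i(π/4)Y_j) · exp(i(π/4)P) · S · exp(−i(π/4)P) · exp(−i(π/4)Y_j) = −Z_j, where Z_j is the Pauli word with Z on qubit j and identity elsewhere. -/

import Mathlib

/-! A Pauli word `E` with `E * E = 1` has `exp (t • E) = cosh t • 1 + sinh t • E`, and if `E`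
anticommutes with `S` then `exp (t • E) * S * exp (-t • E) = exp (2t • E) * S`; at `t = iπ/4`
this is `I • (E * S)`. Here `P` anticommutes with `S` (they meet at `j` as `Y` against `Z`),
while `Y_j` commutes with `P` and anticommutes with `S`, hence with `P * S`. The two quarter
turns therefore send `S` to `I • I • (Y_j * P * S)`, and `Y_j * P * S = Z_j` because its factor
at `j` is `Y Y Z = Z` and at each qubit of `A` it is `Z Z = 1`. -/

open Matrix Complex Real

/-- The single-qubit identity matrix. -/
noncomputable def PauliI : Matrix (Fin 2) (Fin 2) ℂ := !![1, 0; 0, 1]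

/-- The single-qubit Pauli X matrix. -/
noncomputable def PauliX : Matrix (Fin 2) (Fin 2) ℂ := !![0, 1; 1, 0]

/-- The single-qubit Pauli Y matrix. -/
noncomputable def PauliY : Matrix (Fin 2) (Fin 2) ℂ := !![0, -Complex.I; Complex.I, 0]

/-- The single-qubit Pauli Z matrix. -/
noncomputable def PauliZ : Matrix (Fin 2) (Fin 2) ℂ := !![1, 0; 0, -1]

/-- The Pauli word `W(p)`: the `n`-fold Kronecker/tensor product of the single-qubit
matrices `p i`, i.e. the `2^n × 2^n` matrix with entries `W(p)(a,b) = ∏ i, p i (a i) (b i)`. -/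
noncomputable def PauliWord (n : ℕ) (p : Fin n → Matrix (Fin 2) (Fin 2) ℂ) :
    Matrix (Fin n → Fin 2) (Fin n → Fin 2) ℂ :=
  Matrix.of fun a b => ∏ i, p i (a i) (b i)

/-- The stabilizer-rotation Pauli word `P(A, j)`: Pauli Z on every qubit of `A`,
Pauli Y on qubit `j`, and identity elsewhere. -/
noncomputable def stabRot (n : ℕ) (A : Finset (Fin n)) (j : Fin n) :
    Matrix (Fin n → Fin 2) (Fin n → Fin 2) ℂ :=
  PauliWord n fun i => if i = j then PauliY else if i ∈ A then PauliZ else PauliI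

/-- The computational basis vector `e_b` indexed by the bit string `b`. -/
noncomputable def basisVec (n : ℕ) (b : Fin n → Fin 2) : (Fin n → Fin 2) → ℂ :=
  fun a => if a = b then 1 else 0

namespace NormedSpace

variable {𝔸 : Type*} [NormedRing 𝔸] [NormedAlgebra ℚ 𝔸] [NormedAlgebra ℂ 𝔸]

theorem exp_smul_of_mul_self_eq_one {E : 𝔸} (hE : E * E = 1) (t : ℂ) :
    exp (t • E) = Complex.cosh t • (1 : 𝔸) + Complex.sinh t • E := by
  -- `(z, w) ↦ ((z + w) / 2) • 1 + ((z - w) / 2) • E` is a continuous ring map `ℂ × ℂ → 𝔸`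
  -- sending `(t, -t)` to `t • E`, and `exp` commutes with it.
  let f : ℂ × ℂ →+* 𝔸 :=
    { toFun := fun z => ((z.1 + z.2) / 2) • (1 : 𝔸) + ((z.1 - z.2) / 2) • E
      map_one' := by norm_num
      map_mul' := fun z w => by
        simp only [Prod.fst_mul, Prod.snd_mul, mul_add, add_mul, smul_mul_assoc,
          mul_smul_comm, one_mul, mul_one, hE]
        match_scalars <;> ring
      map_zero' := by norm_num
      map_add' := fun z w => by
        simp only [Prod.fst_add, Prod.snd_add]
        match_scalars <;> ring }
  have hf : Continuous f := by
    change Continuous fun z : ℂ × ℂ => ((z.1 + z.2) / 2) • (1 : 𝔸) + ((z.1 - z.2) / 2) • E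
    fun_prop
  have hft : f (t, -t) = t • E := by
    simp only [f, RingHom.coe_mk, MonoidHom.coe_mk, OneHom.coe_mk]
    match_scalars <;> ring
  have hf_exp : f (Complex.exp t, Complex.exp (-t)) = Complex.cosh t • 1 + Complex.sinh t • E := by
    rw [← Complex.cosh_add_sinh, ← Complex.cosh_sub_sinh]
    simp only [f, RingHom.coe_mk, MonoidHom.coe_mk, OneHom.coe_mk]
    match_scalars <;> ring
  have hexp : exp ((t, -t) : ℂ × ℂ) = (Complex.exp t, Complex.exp (-t)) := by
    ext <;> simp [Prod.fst_exp, Prod.snd_exp, ← Complex.exp_eq_exp_ℂ]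
  rw [← hft, ← map_exp f hf, hexp, hf_exp]

theorem exp_smul_mul_mul_exp_neg_smul_of_anticomm [CompleteSpace 𝔸] {E S : 𝔸}
    (hES : E * S = -(S * E)) (t : ℂ) :
    exp (t • E) * S * exp ((-t) • E) = exp ((2 * t) • E) * S := by
  have hS : SemiconjBy S ((-t) • E) (t • E) := by
    rw [SemiconjBy, neg_smul, mul_neg, mul_smul_comm, smul_mul_assoc, hES, smul_neg]
  rw [mul_assoc, hS.exp_right, ← mul_assoc, ← exp_add_of_commute (Commute.refl _), ← add_smul,
    two_mul]

theorem exp_pi_div_two_mul_I_smul {E : 𝔸} (hE : E * E = 1) :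
    exp (((π / 2 : ℂ) * Complex.I) • E) = Complex.I • E := by
  rw [exp_smul_of_mul_self_eq_one hE, Complex.cosh_mul_I, Complex.sinh_mul_I,
    Complex.cos_pi_div_two, Complex.sin_pi_div_two, zero_smul, zero_add, one_mul]

theorem exp_pi_div_four_mul_I_smul_conj [CompleteSpace 𝔸] {E S : 𝔸} (hE : E * E = 1)
    (hES : E * S = -(S * E)) :
    exp (((π / 4 : ℂ) * Complex.I) • E) * S * exp ((-((π / 4 : ℂ) * Complex.I)) • E) =
      Complex.I • (E * S) := by
  rw [exp_smul_mul_mul_exp_neg_smul_of_anticomm hES, ← mul_assoc,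
    show (2 : ℂ) * (π / 4) = π / 2 by ring, exp_pi_div_two_mul_I_smul hE, smul_mul_assoc]

end NormedSpace

theorem PauliI_eq_one : PauliI = 1 := Matrix.one_fin_two.symm

theorem PauliY_mul_self : PauliY * PauliY = 1 := by
  ext i k; fin_cases i <;> fin_cases k <;> simp [PauliY]

theorem PauliZ_mul_self : PauliZ * PauliZ = 1 := by
  ext i k; fin_cases i <;> fin_cases k <;> simp [PauliZ]

theorem PauliY_mul_PauliZ : PauliY * PauliZ = -(PauliZ * PauliY) := by
  ext i k; fin_cases i <;> fin_cases k <;> simp [PauliY, PauliZ]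

namespace PauliWord

variable {n : ℕ}

theorem mul (p q : Fin n → Matrix (Fin 2) (Fin 2) ℂ) :
    PauliWord n p * PauliWord n q = PauliWord n (fun i => p i * q i) := by
  ext a b
  simp only [PauliWord, mul_apply, of_apply, Fintype.prod_sum, ← Finset.prod_mul_distrib]

theorem const_one : PauliWord n (fun _ => 1) = 1 := by
  ext a b
  by_cases hab : a = b
  · simp [PauliWord, hab, one_apply]
  · obtain ⟨i, hi⟩ : ∃ i, a i ≠ b i := Function.ne_iff.mp hab
    simp only [PauliWord, of_apply, one_apply_ne hab]
    exact Finset.prod_eq_zero (Finset.mem_univ i) (one_apply_ne hi)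

theorem mul_self_eq_one {p : Fin n → Matrix (Fin 2) (Fin 2) ℂ} (hp : ∀ i, p i * p i = 1) :
    PauliWord n p * PauliWord n p = 1 := by
  rw [mul, funext hp, const_one]

theorem commute {p q : Fin n → Matrix (Fin 2) (Fin 2) ℂ} (h : ∀ i, Commute (p i) (q i)) :
    Commute (PauliWord n p) (PauliWord n q) := by
  rw [Commute, SemiconjBy, mul, mul]
  exact congrArg _ (funext fun i => (h i).eq)

theorem anticomm {p q : Fin n → Matrix (Fin 2) (Fin 2) ℂ} (j : Fin n)
    (hj : p j * q j = -(q j * p j)) (h : ∀ i ≠ j, Commute (p i) (q i)) :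
    PauliWord n p * PauliWord n q = -(PauliWord n q * PauliWord n p) := by
  rw [mul, mul]
  ext a b
  rw [neg_apply]
  simp only [PauliWord, of_apply]
  rw [Fintype.prod_eq_mul_prod_compl j, Fintype.prod_eq_mul_prod_compl j, hj, neg_apply,
    neg_mul]
  congr 2
  exact Finset.prod_congr rfl fun i hi => by rw [(h i (by simpa using hi)).eq]

end PauliWord

theorem Matrix.exp_pi_div_four_mul_I_smul_conj {N : Type*} [Fintype N] [DecidableEq N]
    {E S : Matrix N N ℂ} (hE : E * E = 1) (hES : E * S = -(S * E)) :
    NormedSpace.exp (((π / 4 : ℂ) * Complex.I) • E) * S *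
      NormedSpace.exp ((-((π / 4 : ℂ) * Complex.I)) • E) =
      Complex.I • (E * S) :=
  -- `NormedSpace.exp` on matrices depends only on the topology, so any matrix norm will do.
  open scoped Matrix.Norms.Operator in NormedSpace.exp_pi_div_four_mul_I_smul_conj hE hES

theorem stabilizer_rotations_map_Z_stabilizer_to_single_Z_general
    (n : ℕ) (A : Finset (Fin n)) (j : Fin n) :
    let S := PauliWord n fun i => if i ∈ insert j A then PauliZ else PauliI
    let P := stabRot n A j
    let Yj := PauliWord n fun i => if i = j then PauliY else PauliI
    NormedSpace.exp (((Real.pi / 4 : ℂ) * Complex.I) • Yj) *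
        NormedSpace.exp (((Real.pi / 4 : ℂ) * Complex.I) • P) * S *
        NormedSpace.exp ((-((Real.pi / 4 : ℂ) * Complex.I)) • P) *
        NormedSpace.exp ((-((Real.pi / 4 : ℂ) * Complex.I)) • Yj) =
      -(PauliWord n fun i => if i = j then PauliZ else PauliI) := by
  intro S P Yj
  have hP : P * P = 1 := PauliWord.mul_self_eq_one fun i => by
    split_ifs <;> simp [PauliY_mul_self, PauliZ_mul_self, PauliI_eq_one]
  have hYj : Yj * Yj = 1 := PauliWord.mul_self_eq_one fun i => by
    split_ifs <;> simp [PauliY_mul_self, PauliI_eq_one]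
  have hPS : P * S = -(S * P) := PauliWord.anticomm j (by simp [PauliY_mul_PauliZ]) fun i hi => by
    simp only [hi, if_false, Finset.mem_insert, false_or]
    split_ifs <;> simp [PauliI_eq_one]
  have hYjP : Commute Yj P := PauliWord.commute fun i => by
    split_ifs <;> simp [PauliI_eq_one]
  have hYjS : Yj * S = -(S * Yj) := PauliWord.anticomm j (by simp [PauliY_mul_PauliZ])
    fun i hi => by simp [hi, PauliI_eq_one]
  have hYjPS : Yj * (P * S) = -(P * S * Yj) := by
    rw [← mul_assoc, hYjP.eq, mul_assoc, hYjS, mul_neg, mul_assoc]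
  have hZj : Yj * P * S = PauliWord n fun i => if i = j then PauliZ else PauliI := by
    simp only [Yj, P, S, stabRot, PauliWord.mul]
    congr 1; funext i
    split_ifs <;> simp_all [PauliY_mul_self, PauliZ_mul_self, PauliI_eq_one]
  calc _ = NormedSpace.exp (((π / 4 : ℂ) * Complex.I) • Yj) *
        (NormedSpace.exp (((π / 4 : ℂ) * Complex.I) • P) * S *
          NormedSpace.exp ((-((π / 4 : ℂ) * Complex.I)) • P)) *
        NormedSpace.exp ((-((π / 4 : ℂ) * Complex.I)) • Yj) := by simp only [mul_assoc]
    _ = Complex.I • (Complex.I • (Yj * (P * S))) := by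
      rw [Matrix.exp_pi_div_four_mul_I_smul_conj hP hPS, mul_smul_comm, smul_mul_assoc,
        Matrix.exp_pi_div_four_mul_I_smul_conj hYj hYjPS]
    _ = _ := by rw [smul_smul, Complex.I_mul_I, neg_one_smul, ← mul_assoc, hZj]

/-- The composition of the `π/4` rotations generated by `P(A, j)` and `Y_j`
maps the Z-type stabilizer supported on `A ∪ {j}` to `-Z_j`. -/
theorem stabilizer_rotations_map_Z_stabilizer_to_single_Z
    (n : ℕ) (A : Finset (Fin n)) (j : Fin n) (hj : j ∉ A) :
    let S := PauliWord n fun i => if i ∈ insert j A then PauliZ else PauliI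
    let P := stabRot n A j
    let Yj := PauliWord n fun i => if i = j then PauliY else PauliI
    NormedSpace.exp (((Real.pi / 4 : ℂ) * Complex.I) • Yj) *
        NormedSpace.exp (((Real.pi / 4 : ℂ) * Complex.I) • P) * S *
        NormedSpace.exp ((-((Real.pi / 4 : ℂ) * Complex.I)) • P) *
        NormedSpace.exp ((-((Real.pi / 4 : ℂ) * Complex.I)) • Yj) =
      -(PauliWord n fun i => if i = j then PauliZ else PauliI) :=
  stabilizer_rotations_map_Z_stabilizer_to_single_Z_general n A j
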